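/- In a spoke matching, for any stabbing chain e, f, g (e stabs f and f stabs g), the stabbing vertex of the middle edge f (with respect to g) lies in the convex hull of e ∪ g. -/

import Mathlib

/-- The line { p | a x + b y = c } given by a triple (a, b, c). -/
def lineOf (l : ℝ × ℝ × ℝ) : Set (ℝ × ℝ) :=
  {p | l.1 * p.1 + l.2.1 * p.2 = l.2.2}

/-- Signed side value of a point with respect to a line (a, b, c). -/
def sideVal (l : ℝ × ℝ × ℝ) (p : ℝ × ℝ) : ℝ :=
  l.1 * p.1 + l.2.1 * p.2 - l.2.2

/-- The union of the lines of an arrangement. -/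
def linesUnion (S : Finset (ℝ × ℝ × ℝ)) : Set (ℝ × ℝ) :=
  ⋃ l ∈ S, lineOf l

/-- An unbounded region of a line arrangement: an unbounded connected component
of the complement of the union of the lines. -/
def IsUnboundedRegion (S : Finset (ℝ × ℝ × ℝ)) (U : Set (ℝ × ℝ)) : Prop :=
  (∃ p ∈ (linesUnion S)ᶜ, U = connectedComponentIn (linesUnion S)ᶜ p) ∧
  ¬ Bornology.IsBounded U

/-- A spoke set for P: a set of pairwise non-parallel lines such that every
unbounded region of the arrangement contains a point of P. -/
def SpokeSet (P : Finset (ℝ × ℝ)) (S : Finset (ℝ × ℝ × ℝ)) : Prop :=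
  (∀ l ∈ S, (l.1, l.2.1) ≠ (0, 0)) ∧
  (∀ l ∈ S, ∀ m ∈ S, l ≠ m → l.1 * m.2.1 - l.2.1 * m.1 ≠ 0) ∧
  (∀ U, IsUnboundedRegion S U → ∃ p ∈ P, (p : ℝ × ℝ) ∈ U)

/-- General position: no three distinct points collinear. -/
def GenPos (P : Set (ℝ × ℝ)) : Prop :=
  ∀ p ∈ P, ∀ q ∈ P, ∀ r ∈ P, p ≠ q → p ≠ r → q ≠ r → ¬ Collinear ℝ {p, q, r}

/-- A avoids B: no line through two distinct points of A meets the convex hull of B. -/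
def Avoids (A B : Finset (ℝ × ℝ)) : Prop :=
  ∀ a₁ ∈ A, ∀ a₂ ∈ A, a₁ ≠ a₂ →
    ∀ x ∈ (affineSpan ℝ {a₁, a₂} : Set (ℝ × ℝ)), x ∉ convexHull ℝ (B : Set (ℝ × ℝ))

/-- A and B can be separated by a line (A strictly on one side, B on the other). -/
def SeparatedByLine (A B : Finset (ℝ × ℝ)) : Prop :=
  ∃ l : ℝ × ℝ × ℝ, (l.1, l.2.1) ≠ (0, 0) ∧
    (∀ a ∈ A, sideVal l a < 0) ∧ (∀ b ∈ B, 0 < sideVal l b)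

/-- The supporting line of the segment from p to q. -/
def suppLine (p q : ℝ × ℝ) : Set (ℝ × ℝ) := (affineSpan ℝ {p, q} : Set (ℝ × ℝ))

/-- Two segments cross: the (unique) intersection point of their supporting
lines lies in both segments. -/
def SegCross (p₁ p₂ q₁ q₂ : ℝ × ℝ) : Prop :=
  ∃ s, suppLine p₁ p₂ ∩ suppLine q₁ q₂ = {s} ∧
    s ∈ segment ℝ p₁ p₂ ∧ s ∈ segment ℝ q₁ q₂

/-- The segment (p₁,p₂) stabs the segment (q₁,q₂): the intersection point of the
supporting lines lies in (q₁,q₂) but not in (p₁,p₂). -/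
def SegStabs (p₁ p₂ q₁ q₂ : ℝ × ℝ) : Prop :=
  ∃ s, suppLine p₁ p₂ ∩ suppLine q₁ q₂ = {s} ∧
    s ∈ segment ℝ q₁ q₂ ∧ s ∉ segment ℝ p₁ p₂

/-- Two segments are parallel: every common point of the supporting lines lies
in neither segment (this also covers parallel supporting lines). -/
def SegParallel (p₁ p₂ q₁ q₂ : ℝ × ℝ) : Prop :=
  ∀ s ∈ suppLine p₁ p₂ ∩ suppLine q₁ q₂,
    s ∉ segment ℝ p₁ p₂ ∧ s ∉ segment ℝ q₁ q₂

/-- v is the stabbing vertex of (p₁,p₂) with respect to (q₁,q₂): (p₁,p₂) stabs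
(q₁,q₂) and v is the endpoint of (p₁,p₂) closer to the intersection point. -/
def StabVertex (p₁ p₂ q₁ q₂ v : ℝ × ℝ) : Prop :=
  ∃ s, suppLine p₁ p₂ ∩ suppLine q₁ q₂ = {s} ∧
    s ∈ segment ℝ q₁ q₂ ∧ s ∉ segment ℝ p₁ p₂ ∧
    ((v = p₁ ∧ dist p₁ s ≤ dist p₂ s) ∨ (v = p₂ ∧ dist p₂ s ≤ dist p₁ s))

/-- Two unbounded regions are antipodal: they lie strictly on opposite sides
of every line of the arrangement. -/
def AntipodalRegions (S : Finset (ℝ × ℝ × ℝ)) (U V : Set (ℝ × ℝ)) : Prop :=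
  IsUnboundedRegion S U ∧ IsUnboundedRegion S V ∧
  ∀ l ∈ S, ∀ u ∈ U, ∀ v ∈ V, sideVal l u * sideVal l v < 0

/-- The endpoints of the edges of a matching. -/
noncomputable def endpoints (M : Finset ((ℝ × ℝ) × (ℝ × ℝ))) : Finset (ℝ × ℝ) :=
  M.image Prod.fst ∪ M.image Prod.snd

/-- M is the spoke matching of the spoke set S for P: its endpoints are points
of P, each unbounded region of the arrangement of S contains exactly one
endpoint of M, and each edge of M joins points in antipodal regions. -/
def SpokeMatching (P : Finset (ℝ × ℝ)) (S : Finset (ℝ × ℝ × ℝ))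
    (M : Finset ((ℝ × ℝ) × (ℝ × ℝ))) : Prop :=
  SpokeSet P S ∧
  (∀ e ∈ M, e.1 ∈ P ∧ e.2 ∈ P) ∧
  (∀ U, IsUnboundedRegion S U → ∃! p, p ∈ endpoints M ∧ p ∈ U) ∧
  (∀ e ∈ M, ∃ U V, AntipodalRegions S U V ∧ e.1 ∈ U ∧ e.2 ∈ V)

private lemma mem_suppLine_iff {x y p : ℝ × ℝ} :
    p ∈ suppLine x y ↔ ∃ t : ℝ, p = x + t • (y - x) := by
  rw [suppLine, SetLike.mem_coe]
  constructor
  · intro hp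
    have hp' : (p - x) +ᵥ x ∈ affineSpan ℝ ({x, y} : Set (ℝ × ℝ)) := by
      simpa [vadd_eq_add, sub_add_cancel] using hp
    obtain ⟨r, hr⟩ := vadd_left_mem_affineSpan_pair.mp hp'
    rw [vsub_eq_sub] at hr
    exact ⟨r, by rw [hr]; abel⟩
  · rintro ⟨t, rfl⟩
    have := (vadd_left_mem_affineSpan_pair (k := ℝ) (p₁ := x) (p₂ := y)
      (v := t • (y - x))).mpr ⟨t, by rw [vsub_eq_sub]⟩
    simpa [vadd_eq_add, add_comm] using this

private lemma sideVal_add_smul (l : ℝ × ℝ × ℝ) (p q : ℝ × ℝ) (t : ℝ) :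
    sideVal l (p + t • q) = sideVal l p + t * (l.1 * q.1 + l.2.1 * q.2) := by
  simp only [sideVal, Prod.fst_add, Prod.snd_add, Prod.smul_fst, Prod.smul_snd, smul_eq_mul]
  ring

private lemma sideVal_sub_dir (l : ℝ × ℝ × ℝ) (x y : ℝ × ℝ) :
    l.1 * (x - y).1 + l.2.1 * (x - y).2 = sideVal l x - sideVal l y := by
  simp only [sideVal, Prod.fst_sub, Prod.snd_sub]
  ring

private lemma sideVal_convex (l : ℝ × ℝ × ℝ) (x y : ℝ × ℝ) {a b : ℝ} (hab : a + b = 1) :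
    sideVal l (a • x + b • y) = a * sideVal l x + b * sideVal l y := by
  have hb : b = 1 - a := by linarith
  subst hb
  simp only [sideVal, Prod.fst_add, Prod.snd_add, Prod.smul_fst, Prod.smul_snd, smul_eq_mul]
  ring

private lemma affine_zero {p q : ℝ} (h : p * q < 0) :
    ∃ u : ℝ, 0 < u ∧ u < 1 ∧ p + u * (q - p) = 0 := by
  have hpq : p - q ≠ 0 := by
    rcases mul_neg_iff.mp h with ⟨hp, hq⟩ | ⟨hp, hq⟩ <;> intro h0 <;> nlinarith
  refine ⟨p / (p - q), ?_, ?_, by field_simp; ring⟩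
  · rcases mul_neg_iff.mp h with ⟨hp, hq⟩ | ⟨hp, hq⟩
    · exact div_pos hp (by linarith)
    · exact div_pos_of_neg_of_neg hp (by linarith)
  · rcases mul_neg_iff.mp h with ⟨hp, hq⟩ | ⟨hp, hq⟩
    · rw [div_lt_one (by linarith)]; linarith
    · have : p / (p - q) = (-p) / (-(p - q)) := by rw [neg_div_neg_eq]
      rw [this, neg_sub]
      rw [div_lt_one (by linarith)]; linarith

set_option maxHeartbeats 1000000 in
theorem stmt13 (P : Finset (ℝ × ℝ)) (S : Finset (ℝ × ℝ × ℝ))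
    (M : Finset ((ℝ × ℝ) × (ℝ × ℝ))) (hM : SpokeMatching P S M)
    (e f g : (ℝ × ℝ) × (ℝ × ℝ)) (he : e ∈ M) (hf : f ∈ M) (hg : g ∈ M)
    (hef : e ≠ f) (heg : e ≠ g) (hfg : f ≠ g)
    (hef' : SegStabs e.1 e.2 f.1 f.2)
    (v : ℝ × ℝ) (hv : StabVertex f.1 f.2 g.1 g.2 v) :
    v ∈ convexHull ℝ ({e.1, e.2, g.1, g.2} : Set (ℝ × ℝ)) := by
  obtain ⟨s, hsingFG, hsg, hsnf, hvd⟩ := hv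
  obtain ⟨s', hsingEF, hs'f, hs'ne⟩ := hef'
  -- the intersection point s lies on both supporting lines
  have hsFG : s ∈ suppLine f.1 f.2 ∩ suppLine g.1 g.2 := by
    rw [hsingFG]; exact Set.mem_singleton s
  -- f is nondegenerate
  have hf12 : f.1 ≠ f.2 := by
    intro h
    obtain ⟨t, hts⟩ := mem_suppLine_iff.mp hsFG.1
    rw [← h] at hts
    simp only [sub_self, smul_zero, add_zero] at hts
    exact hsnf (hts ▸ left_mem_segment ℝ f.1 f.2)
  -- e is nondegenerate
  have hs'EF : s' ∈ suppLine e.1 e.2 ∩ suppLine f.1 f.2 := by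
    rw [hsingEF]; exact Set.mem_singleton s'
  have he12 : e.1 ≠ e.2 := by
    intro h
    obtain ⟨t, hts⟩ := mem_suppLine_iff.mp hs'EF.1
    rw [← h] at hts
    simp only [sub_self, smul_zero, add_zero] at hts
    exact hs'ne (hts ▸ left_mem_segment ℝ e.1 e.2)
  -- parametrize s on the line of f
  obtain ⟨t, ht⟩ := mem_suppLine_iff.mp hsFG.1
  have htout : t < 0 ∨ 1 < t := by
    by_contra hc
    push_neg at hc
    exact hsnf (by
      rw [segment_eq_image']
      exact ⟨t, ⟨hc.1, hc.2⟩, ht.symm⟩)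
  have hnd : (0:ℝ) < ‖f.2 - f.1‖ := norm_pos_iff.mpr (sub_ne_zero.mpr hf12.symm)
  have d1 : dist f.1 s = |t| * ‖f.2 - f.1‖ := by
    rw [dist_eq_norm, ht]
    have : f.1 - (f.1 + t • (f.2 - f.1)) = (-t) • (f.2 - f.1) := by module
    rw [this, norm_smul, Real.norm_eq_abs, abs_neg]
  have d2 : dist f.2 s = |t - 1| * ‖f.2 - f.1‖ := by
    rw [dist_eq_norm, ht]
    have : f.2 - (f.1 + t • (f.2 - f.1)) = (1 - t) • (f.2 - f.1) := by module
    rw [this, norm_smul, Real.norm_eq_abs, abs_sub_comm 1 t]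
  -- identify v, the other endpoint w, and the parameter μ with s = v + μ • (v - w)
  obtain ⟨w, μ, hμ, hsv, hvw_or⟩ :
      ∃ (w : ℝ × ℝ) (μ : ℝ), 0 < μ ∧ s = v + μ • (v - w) ∧ ((v = f.1 ∧ w = f.2) ∨ (v = f.2 ∧ w = f.1)) := by
    rcases htout with h | h
    · have hv1 : v = f.1 := by
        rcases hvd with ⟨h1, _⟩ | ⟨_, hle⟩
        · exact h1
        · exfalso
          rw [d1, d2, abs_of_neg h, abs_of_neg (by linarith : t - 1 < 0)] at hle
          nlinarith
      exact ⟨f.2, -t, by linarith, by rw [hv1, ht]; module, Or.inl ⟨hv1, rfl⟩⟩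
    · have hv2 : v = f.2 := by
        rcases hvd with ⟨_, hle⟩ | ⟨h2, _⟩
        · exfalso
          rw [d1, d2, abs_of_pos (by linarith : (0:ℝ) < t),
            abs_of_pos (by linarith : (0:ℝ) < t - 1)] at hle
          nlinarith
        · exact h2
      exact ⟨f.1, t - 1, by linarith, by rw [hv2, ht]; module, Or.inr ⟨hv2, rfl⟩⟩
  have hw_ne : v ≠ w := by
    rcases hvw_or with ⟨h1, h2⟩ | ⟨h1, h2⟩ <;> rw [h1, h2]
    · exact hf12
    · exact hf12.symm
  have hLset : suppLine f.1 f.2 = suppLine v w := by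
    rcases hvw_or with ⟨h1, h2⟩ | ⟨h1, h2⟩ <;> rw [h1, h2]
    · simp [suppLine, Set.pair_comm f.1 f.2]
  have hsegf : segment ℝ f.1 f.2 = segment ℝ v w := by
    rcases hvw_or with ⟨h1, h2⟩ | ⟨h1, h2⟩ <;> rw [h1, h2]
    · rw [segment_symm]
  -- every edge of M crosses every spoke line strictly
  have hcross : ∀ x ∈ M, ∀ l ∈ S, sideVal l x.1 * sideVal l x.2 < 0 := by
    intro x hx l hl
    obtain ⟨U, V, hant, h1, h2⟩ := hM.2.2.2 x hx
    exact hant.2.2 l hl x.1 h1 x.2 h2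
  have hvs : ∀ l ∈ S, sideVal l v * sideVal l w < 0 := by
    intro l hl
    have hcf := hcross f hf l hl
    rcases hvw_or with ⟨h1, h2⟩ | ⟨h1, h2⟩ <;> rw [h1, h2]
    · exact hcf
    · rw [mul_comm]; exact hcf
  -- the candidate unbounded region of v
  set Q : Set (ℝ × ℝ) := {p | ∀ l ∈ S, 0 < sideVal l p * sideVal l v} with hQdef
  have hQmem : ∀ p : ℝ × ℝ, p ∈ Q ↔ ∀ l ∈ S, 0 < sideVal l p * sideVal l v :=
    fun p => Iff.rfl
  have hQv : v ∈ Q := by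
    rw [hQmem]
    intro l hl
    have h := hvs l hl
    exact mul_self_pos.mpr (fun h0 => by rw [h0] at h; simp at h)
  have hbey : ∀ t : ℝ, 0 ≤ t → v + t • (v - w) ∈ Q := by
    intro t htn
    rw [hQmem]
    intro l hl
    have h := hvs l hl
    have hv2 : 0 < sideVal l v * sideVal l v :=
      mul_self_pos.mpr (fun h0 => by rw [h0] at h; simp at h)
    rw [sideVal_add_smul, sideVal_sub_dir]
    nlinarith [mul_nonneg htn hv2.le, mul_nonneg htn (neg_nonneg.mpr h.le)]
  have hQsub : Q ⊆ (linesUnion S)ᶜ := by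
    intro p hp hpU
    simp only [linesUnion, lineOf, Set.mem_iUnion, Set.mem_setOf_eq] at hpU
    obtain ⟨l, hl, hpl⟩ := hpU
    have h0 : sideVal l p = 0 := sub_eq_zero.mpr hpl
    have := (hQmem p).mp hp l hl
    rw [h0, zero_mul] at this
    exact lt_irrefl 0 this
  have hQconv : Convex ℝ Q := by
    intro x hx y hy a b ha hb hab
    rw [hQmem] at hx hy ⊢
    intro l hl
    have hx' := hx l hl
    have hy' := hy l hl
    rw [sideVal_convex l x y hab]
    rcases eq_or_lt_of_le ha with h0 | h0
    · have hb1 : b = 1 := by linarith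
      rw [← h0, hb1]; simpa using hy'
    · nlinarith [mul_pos h0 hx', mul_nonneg hb hy'.le]
  have hQeq : Q = connectedComponentIn (linesUnion S)ᶜ v := by
    apply Set.Subset.antisymm
    · exact hQconv.isPreconnected.subset_connectedComponentIn hQv hQsub
    · intro p hp
      rw [hQmem]
      intro l hl
      have hpU : p ∈ (linesUnion S)ᶜ := connectedComponentIn_subset _ _ hp
      have hvU : v ∈ (linesUnion S)ᶜ := hQsub hQv
      have hvmem : v ∈ connectedComponentIn (linesUnion S)ᶜ v := mem_connectedComponentIn hvU
      have hcont : ContinuousOn (sideVal l) (connectedComponentIn (linesUnion S)ᶜ v) := by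
        apply Continuous.continuousOn
        unfold sideVal
        fun_prop
      by_contra hcon
      push_neg at hcon
      have hnz : ∀ z ∈ connectedComponentIn (linesUnion S)ᶜ v, sideVal l z ≠ 0 := by
        intro z hz h0
        have hzU := connectedComponentIn_subset (linesUnion S)ᶜ v hz
        apply hzU
        simp only [linesUnion, lineOf, Set.mem_iUnion, Set.mem_setOf_eq]
        exact ⟨l, hl, sub_eq_zero.mp h0⟩
      have hpnz := hnz p hp
      have hvnz := hnz v hvmem
      have hpre := isPreconnected_connectedComponentIn (x := v) (F := (linesUnion S)ᶜ)
      have h0im : (0:ℝ) ∈ sideVal l '' connectedComponentIn (linesUnion S)ᶜ v := by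
        rcases le_total (sideVal l p) (sideVal l v) with hle | hle
        · exact hpre.intermediate_value hp hvmem hcont
            ⟨by nlinarith [lt_of_le_of_ne hcon (mul_ne_zero hpnz hvnz)],
             by nlinarith [lt_of_le_of_ne hcon (mul_ne_zero hpnz hvnz)]⟩
        · exact hpre.intermediate_value hvmem hp hcont
            ⟨by nlinarith [lt_of_le_of_ne hcon (mul_ne_zero hpnz hvnz)],
             by nlinarith [lt_of_le_of_ne hcon (mul_ne_zero hpnz hvnz)]⟩
      obtain ⟨z, hz, hz0⟩ := h0im
      exact hnz z hz hz0
  have hQunb : ¬ Bornology.IsBounded Q := by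
    intro hb
    obtain ⟨C, hC⟩ := isBounded_iff_forall_norm_le.mp hb
    have hd : (0:ℝ) < ‖v - w‖ := norm_pos_iff.mpr (sub_ne_zero.mpr hw_ne)
    have hCv := hC v hQv
    set T : ℝ := (C + ‖v‖ + 1) / ‖v - w‖ with hTdef
    have hT : 0 ≤ T := div_nonneg (by linarith [norm_nonneg v]) hd.le
    have hp := hC (v + T • (v - w)) (hbey T hT)
    have h1 : ‖T • (v - w)‖ = ‖(v + T • (v - w)) - v‖ := by
      congr 1; abel
    have h2 : ‖(v + T • (v - w)) - v‖ ≤ ‖v + T • (v - w)‖ + ‖v‖ := norm_sub_le _ _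
    rw [norm_smul, Real.norm_eq_abs, abs_of_nonneg hT] at h1
    have h3 : T * ‖v - w‖ = C + ‖v‖ + 1 := div_mul_cancel₀ _ hd.ne'
    linarith
  have hQreg : IsUnboundedRegion S Q := ⟨⟨v, hQsub hQv, hQeq⟩, hQunb⟩
  obtain ⟨p₀, hp₀, hup⟩ := hM.2.2.1 Q hQreg
  have huniq2 : ∀ x y : ℝ × ℝ, (x ∈ endpoints M ∧ x ∈ Q) → (y ∈ endpoints M ∧ y ∈ Q) → x = y :=
    fun x y hx hy => (hup x hx).trans (hup y hy).symm
  have hmem_end : ∀ x ∈ M, x.1 ∈ endpoints M ∧ x.2 ∈ endpoints M := by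
    intro x hx
    constructor
    · exact Finset.mem_union_left _ (Finset.mem_image.mpr ⟨x, hx, rfl⟩)
    · exact Finset.mem_union_right _ (Finset.mem_image.mpr ⟨x, hx, rfl⟩)
  have hvend : v ∈ endpoints M := by
    rcases hvw_or with ⟨h1, _⟩ | ⟨h1, _⟩ <;> rw [h1]
    · exact (hmem_end f hf).1
    · exact (hmem_end f hf).2
  have hsnev : s ≠ v := by
    rw [hsv]
    intro hE
    have h0 : μ • (v - w) = 0 := by
      have := hE
      rwa [add_eq_left] at this
    rcases smul_eq_zero.mp h0 with h | h
    · exact hμ.ne' h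
    · exact hw_ne (sub_eq_zero.mp h)
  -- the linear functional vanishing on the line of f
  set Hf : (ℝ × ℝ) → ℝ := fun p => (p.1 - v.1) * (w.2 - v.2) - (p.2 - v.2) * (w.1 - v.1)
    with hHdef
  have Hcomb : ∀ (p q : ℝ × ℝ) (t : ℝ),
      Hf (p + t • (q - p)) = Hf p + t * (Hf q - Hf p) := by
    intro p q t
    simp only [hHdef, Prod.fst_add, Prod.snd_add, Prod.fst_sub, Prod.snd_sub,
      Prod.smul_fst, Prod.smul_snd, smul_eq_mul]
    ring
  have hw_ne' : ¬ (w.1 - v.1 = 0 ∧ w.2 - v.2 = 0) := by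
    rintro ⟨h1, h2⟩
    exact hw_ne (Prod.ext (by linarith) (by linarith)).symm
  have Hzero : ∀ p, Hf p = 0 ↔ p ∈ suppLine v w := by
    intro p
    constructor
    · intro h0
      rw [mem_suppLine_iff]
      simp only [hHdef] at h0
      rcases ne_or_eq (w.1 - v.1) 0 with ha | ha
      · refine ⟨(p.1 - v.1) / (w.1 - v.1), ?_⟩
        rw [Prod.ext_iff]
        constructor
        · simp only [Prod.fst_add, Prod.smul_fst, Prod.fst_sub, smul_eq_mul]
          field_simp
          ring
        · simp only [Prod.snd_add, Prod.smul_snd, Prod.snd_sub, smul_eq_mul]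
          field_simp
          linarith [h0]
      · have hb : w.2 - v.2 ≠ 0 := fun hb0 => hw_ne' ⟨ha, hb0⟩
        have hp1 : p.1 - v.1 = 0 := by
          rcases mul_eq_zero.mp (by rw [ha, mul_zero] at h0; linarith : (p.1 - v.1) * (w.2 - v.2) = 0) with h | h
          · exact h
          · exact absurd h hb
        refine ⟨(p.2 - v.2) / (w.2 - v.2), ?_⟩
        rw [Prod.ext_iff]
        constructor
        · simp only [Prod.fst_add, Prod.smul_fst, Prod.fst_sub, smul_eq_mul]
          rw [ha, mul_zero]
          linarith
        · simp only [Prod.snd_add, Prod.smul_snd, Prod.snd_sub, smul_eq_mul]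
          field_simp
          ring
    · intro hmem
      obtain ⟨t, rfl⟩ := mem_suppLine_iff.mp hmem
      simp only [hHdef, Prod.fst_add, Prod.snd_add, Prod.fst_sub, Prod.snd_sub,
        Prod.smul_fst, Prod.smul_snd, smul_eq_mul]
      ring
  -- the segment e misses the line of f
  have hseg_e_L : ∀ z ∈ segment ℝ e.1 e.2, z ∉ suppLine f.1 f.2 := by
    intro z hz hzL
    have hzE : z ∈ suppLine e.1 e.2 := by
      rw [segment_eq_image'] at hz
      obtain ⟨θ, _, rfl⟩ := hz
      exact mem_suppLine_iff.mpr ⟨θ, rfl⟩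
    have hzs : z ∈ ({s'} : Set (ℝ × ℝ)) := by
      rw [← hsingEF]; exact ⟨hzE, hzL⟩
    rw [Set.mem_singleton_iff] at hzs
    rw [hzs] at hz
    exact hs'ne hz
  have hHe1 : Hf e.1 ≠ 0 := fun h0 =>
    hseg_e_L e.1 (left_mem_segment ℝ e.1 e.2) (by rw [hLset]; exact (Hzero e.1).mp h0)
  have hHe2 : Hf e.2 ≠ 0 := fun h0 =>
    hseg_e_L e.2 (right_mem_segment ℝ e.1 e.2) (by rw [hLset]; exact (Hzero e.2).mp h0)
  have hee : 0 < Hf e.1 * Hf e.2 := by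
    rcases lt_trichotomy (Hf e.1 * Hf e.2) 0 with hlt | heq | hgt
    · exfalso
      obtain ⟨u, hu0, hu1, huz⟩ := affine_zero hlt
      have hzH : Hf (e.1 + u • (e.2 - e.1)) = 0 := by rw [Hcomb]; linarith [huz]
      refine hseg_e_L (e.1 + u • (e.2 - e.1)) ?_ (by rw [hLset]; exact (Hzero _).mp hzH)
      rw [segment_eq_image']
      exact ⟨u, ⟨hu0.le, hu1.le⟩, rfl⟩
    · exact absurd heq (mul_ne_zero hHe1 hHe2)
    · exact hgt
  -- s on the line of v,w and Hf s = 0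
  have hsL : s ∈ suppLine v w := mem_suppLine_iff.mpr ⟨-μ, by rw [hsv]; module⟩
  have hHs : Hf s = 0 := (Hzero s).mpr hsL
  have hHv : Hf v = 0 := by simp [hHdef]
  -- endpoints of g are not on the line of f
  have hgend : ∀ z : ℝ × ℝ, (z = g.1 ∨ z = g.2) → Hf z ≠ 0 := by
    intro z hzg h0
    have hzL : z ∈ suppLine f.1 f.2 := by rw [hLset]; exact (Hzero z).mp h0
    have hzG : z ∈ suppLine g.1 g.2 := by
      rcases hzg with rfl | rfl
      · exact mem_suppLine_iff.mpr ⟨0, by simp⟩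
      · exact mem_suppLine_iff.mpr ⟨1, by module⟩
    have hzs : z = s := by
      have : z ∈ ({s} : Set (ℝ × ℝ)) := by rw [← hsingFG]; exact ⟨hzL, hzG⟩
      rwa [Set.mem_singleton_iff] at this
    have hzend : z ∈ endpoints M := by
      rcases hzg with rfl | rfl
      · exact (hmem_end g hg).1
      · exact (hmem_end g hg).2
    have hzQ : z ∈ Q := by rw [hzs, hsv]; exact hbey μ hμ.le
    exact hsnev (by rw [← hzs, huniq2 z v ⟨hzend, hzQ⟩ ⟨hvend, hQv⟩])
  have hgg : Hf g.1 * Hf g.2 < 0 := by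
    rcases lt_trichotomy (Hf g.1 * Hf g.2) 0 with hlt | heq | hgt
    · exact hlt
    · exfalso
      rcases mul_eq_zero.mp heq with h | h
      · exact hgend g.1 (Or.inl rfl) h
      · exact hgend g.2 (Or.inr rfl) h
    · exfalso
      rw [segment_eq_image'] at hsg
      obtain ⟨θ, ⟨hθ0, hθ1⟩, hsθ⟩ := hsg
      have hcomb : (0:ℝ) = Hf g.1 + θ * (Hf g.2 - Hf g.1) := by
        rw [← hHs, ← hsθ, Hcomb]
      rcases mul_pos_iff.mp hgt with ⟨hp, hq⟩ | ⟨hp, hq⟩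
      · nlinarith [mul_nonneg hθ0 hq.le, mul_nonneg (by linarith : (0:ℝ) ≤ 1 - θ) hp.le,
          mul_pos hp hq]
      · nlinarith [mul_nonneg hθ0 (neg_nonneg.mpr hq.le),
          mul_nonneg (by linarith : (0:ℝ) ≤ 1 - θ) (neg_nonneg.mpr hp.le), mul_pos_of_neg_of_neg hp hq]
  -- choose the endpoint A of g on the opposite side of the line of f from e
  obtain ⟨A, hAg, hAprod⟩ : ∃ A : ℝ × ℝ, (A = g.1 ∨ A = g.2) ∧ Hf e.1 * Hf A < 0 := by
    rcases lt_trichotomy (Hf e.1 * Hf g.1) 0 with h | h | h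
    · exact ⟨g.1, Or.inl rfl, h⟩
    · exfalso
      rcases mul_eq_zero.mp h with h0 | h0
      · exact hHe1 h0
      · exact hgend g.1 (Or.inl rfl) h0
    · refine ⟨g.2, Or.inr rfl, ?_⟩
      rcases lt_or_gt_of_ne hHe1 with h1 | h1
      · have hg1 : Hf g.1 < 0 := by nlinarith
        have hg2 : 0 < Hf g.2 := by nlinarith
        exact mul_neg_of_neg_of_pos h1 hg2
      · have hg1 : 0 < Hf g.1 := pos_of_mul_pos_right h h1.le
        have hg2 : Hf g.2 < 0 := neg_of_mul_neg_right hgg hg1.le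
        exact mul_neg_of_pos_of_neg h1 hg2
  have hAprod2 : Hf e.2 * Hf A < 0 := by
    rcases lt_or_gt_of_ne hHe1 with h1 | h1
    · have hA0 : 0 < Hf A := pos_of_mul_neg_right hAprod h1.le
      have he2 : Hf e.2 < 0 := neg_of_mul_pos_right hee h1.le
      exact mul_neg_of_neg_of_pos he2 hA0
    · have hA0 : Hf A < 0 := neg_of_mul_neg_right hAprod h1.le
      have he2 : 0 < Hf e.2 := pos_of_mul_pos_right hee h1.le
      exact mul_neg_of_pos_of_neg he2 hA0
  have hAin : A ∈ ({e.1, e.2, g.1, g.2} : Set (ℝ × ℝ)) := by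
    rcases hAg with rfl | rfl <;> simp
  have hAend : A ∈ endpoints M := by
    rcases hAg with rfl | rfl
    · exact (hmem_end g hg).1
    · exact (hmem_end g hg).2
  -- intersection of [e.i, A] with the line of f
  obtain ⟨u₁, hu₁0, hu₁1, hz₁⟩ := affine_zero hAprod
  obtain ⟨u₂, hu₂0, hu₂1, hz₂⟩ := affine_zero hAprod2
  have hc₁H : Hf (e.1 + u₁ • (A - e.1)) = 0 := by rw [Hcomb]; linarith [hz₁]
  have hc₂H : Hf (e.2 + u₂ • (A - e.2)) = 0 := by rw [Hcomb]; linarith [hz₂]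
  obtain ⟨r₁, hr₁⟩ := mem_suppLine_iff.mp ((Hzero _).mp hc₁H)
  obtain ⟨r₂, hr₂⟩ := mem_suppLine_iff.mp ((Hzero _).mp hc₂H)
  have hc₁v : e.1 + u₁ • (A - e.1) = v + (-r₁) • (v - w) := by rw [hr₁]; module
  have hc₂v : e.2 + u₂ • (A - e.2) = v + (-r₂) • (v - w) := by rw [hr₂]; module
  -- the hull and a finishing lemma for the easy case
  have hs_hull : s ∈ convexHull ℝ ({e.1, e.2, g.1, g.2} : Set (ℝ × ℝ)) := by
    have hsub : segment ℝ g.1 g.2 ⊆ convexHull ℝ ({e.1, e.2, g.1, g.2} : Set (ℝ × ℝ)) :=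
      segment_subset_convexHull (by simp) (by simp)
    exact hsub hsg
  have hfinish : ∀ (c : ℝ × ℝ) (tc : ℝ), tc ≤ 0 → c = v + tc • (v - w) →
      c ∈ convexHull ℝ ({e.1, e.2, g.1, g.2} : Set (ℝ × ℝ)) →
      v ∈ convexHull ℝ ({e.1, e.2, g.1, g.2} : Set (ℝ × ℝ)) := by
    intro c tc htc hc hch
    have hμtc : (0:ℝ) < μ - tc := by linarith
    have hvmem : v ∈ segment ℝ c s := by
      rw [segment_eq_image']
      refine ⟨(-tc) / (μ - tc), ⟨div_nonneg (by linarith) hμtc.le, ?_⟩, ?_⟩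
      · rw [div_le_one hμtc]; linarith
      · show c + (-tc / (μ - tc)) • (s - c) = v
        rw [hc, hsv]
        have hsc : (v + μ • (v - w)) - (v + tc • (v - w)) = (μ - tc) • (v - w) := by module
        rw [hsc, smul_smul, div_mul_cancel₀ _ hμtc.ne']
        module
    exact (convex_convexHull ℝ _).segment_subset hch hs_hull hvmem
  have hc₁hull : (e.1 + u₁ • (A - e.1)) ∈ convexHull ℝ ({e.1, e.2, g.1, g.2} : Set (ℝ × ℝ)) := by
    have hsub : segment ℝ e.1 A ⊆ convexHull ℝ ({e.1, e.2, g.1, g.2} : Set (ℝ × ℝ)) :=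
      segment_subset_convexHull (by simp) hAin
    refine hsub ?_
    rw [segment_eq_image']
    exact ⟨u₁, ⟨hu₁0.le, hu₁1.le⟩, rfl⟩
  have hc₂hull : (e.2 + u₂ • (A - e.2)) ∈ convexHull ℝ ({e.1, e.2, g.1, g.2} : Set (ℝ × ℝ)) := by
    have hsub : segment ℝ e.2 A ⊆ convexHull ℝ ({e.1, e.2, g.1, g.2} : Set (ℝ × ℝ)) :=
      segment_subset_convexHull (by simp) hAin
    refine hsub ?_
    rw [segment_eq_image']
    exact ⟨u₂, ⟨hu₂0.le, hu₂1.le⟩, rfl⟩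
  rcases le_or_gt (-r₁) 0 with ht₁ | ht₁
  · exact hfinish _ (-r₁) ht₁ hc₁v hc₁hull
  rcases le_or_gt (-r₂) 0 with ht₂ | ht₂
  · exact hfinish _ (-r₂) ht₂ hc₂v hc₂hull
  -- both crossing points lie beyond v: contradiction with the uniqueness of endpoints
  exfalso
  have hc₁Q : (e.1 + u₁ • (A - e.1)) ∈ Q := by rw [hc₁v]; exact hbey (-r₁) ht₁.le
  have hc₂Q : (e.2 + u₂ • (A - e.2)) ∈ Q := by rw [hc₂v]; exact hbey (-r₂) ht₂.le
  have hAQ : A ∈ Q := by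
    rw [hQmem]
    intro l hl
    by_contra hcon
    push_neg at hcon
    have hxe := hcross e he l hl
    have hσ := hvs l hl
    have hσ0 : sideVal l v ≠ 0 := fun h0 => by rw [h0] at hσ; simp at hσ
    have hσ2 : 0 < sideVal l v * sideVal l v := mul_self_pos.mpr hσ0
    have hx1 : sideVal l e.1 * sideVal l v < 0 ∨ sideVal l e.2 * sideVal l v < 0 := by
      by_contra hno
      push_neg at hno
      have h1 : 0 ≤ (sideVal l e.1 * sideVal l v) * (sideVal l e.2 * sideVal l v) :=
        mul_nonneg hno.1 hno.2
      have h2 : (sideVal l e.1 * sideVal l v) * (sideVal l e.2 * sideVal l v)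
          = (sideVal l e.1 * sideVal l e.2) * (sideVal l v * sideVal l v) := by ring
      have h3 : (sideVal l e.1 * sideVal l e.2) * (sideVal l v * sideVal l v) < 0 :=
        mul_neg_of_neg_of_pos hxe hσ2
      rw [h2] at h1
      linarith
    have hval : ∀ (p : ℝ × ℝ) (u : ℝ), sideVal l (p + u • (A - p)) =
        sideVal l p + u * (sideVal l A - sideVal l p) := by
      intro p u; rw [sideVal_add_smul, sideVal_sub_dir]
    rcases hx1 with hx | hx
    · have hq := (hQmem _).mp hc₁Q l hl
      rw [hval] at hq
      have h1 : u₁ * (sideVal l A * sideVal l v) ≤ 0 :=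
        mul_nonpos_of_nonneg_of_nonpos hu₁0.le hcon
      have h2 : (1 - u₁) * (sideVal l e.1 * sideVal l v) < 0 :=
        mul_neg_of_pos_of_neg (by linarith : (0:ℝ) < 1 - u₁) hx
      have h3 : (sideVal l e.1 + u₁ * (sideVal l A - sideVal l e.1)) * sideVal l v
          = (1 - u₁) * (sideVal l e.1 * sideVal l v) + u₁ * (sideVal l A * sideVal l v) := by
        ring
      rw [h3] at hq
      linarith
    · have hq := (hQmem _).mp hc₂Q l hl
      rw [hval] at hq
      have h1 : u₂ * (sideVal l A * sideVal l v) ≤ 0 :=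
        mul_nonpos_of_nonneg_of_nonpos hu₂0.le hcon
      have h2 : (1 - u₂) * (sideVal l e.2 * sideVal l v) < 0 :=
        mul_neg_of_pos_of_neg (by linarith : (0:ℝ) < 1 - u₂) hx
      have h3 : (sideVal l e.2 + u₂ * (sideVal l A - sideVal l e.2)) * sideVal l v
          = (1 - u₂) * (sideVal l e.2 * sideVal l v) + u₂ * (sideVal l A * sideVal l v) := by
        ring
      rw [h3] at hq
      linarith
  have hAv : A = v := huniq2 A v ⟨hAend, hAQ⟩ ⟨hvend, hQv⟩
  have : Hf A ≠ 0 := fun h0 => by rw [h0, mul_zero] at hAprod; exact lt_irrefl 0 hAprod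
  exact this (by rw [hAv, hHv])
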